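/- Increment bound for partial derivatives of L (estimate used in the proof of Proposition 4.6): Let 1 ≤ l ≤ d and j ∈ {1,…,d} be integers. Write points of ℝ^d as (w,x,y) with w ∈ ℝ, x ∈ ℝ^{l−1}, y ∈ ℝ^{d−l}. Let u : ℝ^{d−l} → [0,∞) be continuous, let 0 ≤ γ_j ≤ 1 and γ_{1j} ≥ 0, and let L : ℝ^d → ℝ be twice continuously differentiable with |∂_j L(w,x,y)| ≤ (1 + ‖(w,x)‖^{γ_j}) u(y) and |∂₁ ∂_j L(w,x,y)| ≤ (1 + ‖(w,x)‖^{γ_{1j}}) u(y) for all (w,x,y), where ‖·‖ is the maximum norm. Then for every M > 0 there exists a constant K > 0 such that for all w, z ∈ ℝ and all (x,y) with ‖x‖ ≤ M and ‖y‖ ≤ M: |∂_j L(w+z, x, y) − ∂_j L(w, x, y)| ≤ K (1 + |w|^{γ_j + γ_{1j}}) |z|^{γ_j}. -/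

import Mathlib

open Filter Topology

/-- Splice `w ∈ ℝ`, `x ∈ ℝ^{l−1}` and `y ∈ ℝ^{d−l}` into a point `(w,x,y)` of `ℝ^d`. -/
def splice3 (d l : ℕ) (hl : 1 ≤ l) (hld : l ≤ d) (w : ℝ)
    (x : Fin (l - 1) → ℝ) (y : Fin (d - l) → ℝ) : Fin d → ℝ :=
  fun j =>
    if h0 : (j : ℕ) = 0 then w
    else if h : (j : ℕ) < l then x ⟨(j : ℕ) - 1, by omega⟩
    else y ⟨(j : ℕ) - l, by have := j.isLt; omega⟩

lemma aux_rpow (a s t : ℝ) (ha : 0 ≤ a) (hs : 0 ≤ s) (hst : s ≤ t) :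
    (a + 1) ^ s ≤ 2 ^ s * (1 + a ^ t) := by
  have h1 : (1:ℝ) ≤ max 1 a := le_max_left _ _
  have h2 : a + 1 ≤ 2 * max 1 a := by
    have := le_max_right (1:ℝ) a; nlinarith
  calc (a+1)^s ≤ (2 * max 1 a)^s := Real.rpow_le_rpow (by linarith) h2 hs
    _ = 2^s * (max 1 a)^s := Real.mul_rpow (by norm_num) (by linarith)
    _ ≤ 2^s * (max 1 a)^t :=
        mul_le_mul_of_nonneg_left (Real.rpow_le_rpow_of_exponent_le h1 hst)
          (Real.rpow_nonneg (by norm_num) s)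
    _ ≤ 2^s * (1 + a^t) := by
        refine mul_le_mul_of_nonneg_left ?_ (Real.rpow_nonneg (by norm_num) s)
        rcases le_total a 1 with h|h
        · rw [max_eq_left h, Real.one_rpow]
          have := Real.rpow_nonneg ha t; linarith
        · rw [max_eq_right h]; linarith

lemma splice3_affine (d l : ℕ) (hl : 1 ≤ l) (hld : l ≤ d) (w : ℝ)
    (x : Fin (l - 1) → ℝ) (y : Fin (d - l) → ℝ) :
    splice3 d l hl hld w x y
      = splice3 d l hl hld 0 x y
        + w • (Pi.single (⟨0, Nat.lt_of_lt_of_le hl hld⟩ : Fin d) (1:ℝ) : Fin d → ℝ) := by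
  funext i
  simp only [splice3, Pi.add_apply, Pi.smul_apply, Pi.single_apply, smul_eq_mul]
  by_cases h0 : (i : ℕ) = 0
  · have : i = (⟨0, Nat.lt_of_lt_of_le hl hld⟩ : Fin d) := by ext; simpa using h0
    simp [h0, this]
  · have : i ≠ (⟨0, Nat.lt_of_lt_of_le hl hld⟩ : Fin d) := by
      intro h; apply h0; rw [h]
    simp [h0, this]

lemma splice3_hasDerivAt (d l : ℕ) (hl : 1 ≤ l) (hld : l ≤ d) (j : Fin d)
    (L : (Fin d → ℝ) → ℝ) (hL : ContDiff ℝ 2 L)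
    (x : Fin (l - 1) → ℝ) (y : Fin (d - l) → ℝ) (w : ℝ) :
    HasDerivAt (fun w' => fderiv ℝ L (splice3 d l hl hld w' x y) (Pi.single j 1))
      (fderiv ℝ (fun v => fderiv ℝ L v (Pi.single j 1))
        (splice3 d l hl hld w x y) (Pi.single (⟨0, Nat.lt_of_lt_of_le hl hld⟩ : Fin d) 1)) w := by
  have hD : ContDiff ℝ 1 (fun v => fderiv ℝ L v (Pi.single j 1)) := by
    have h1 : ContDiff ℝ 1 (fderiv ℝ L) := hL.fderiv_right (by norm_num)
    exact h1.clm_apply contDiff_const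
  set e₀ : Fin d → ℝ := Pi.single (⟨0, Nat.lt_of_lt_of_le hl hld⟩ : Fin d) (1:ℝ) with he₀
  have hline : HasDerivAt (fun w' : ℝ => splice3 d l hl hld 0 x y + w' • e₀) e₀ w := by
    have := ((hasDerivAt_id w).smul_const e₀).const_add (splice3 d l hl hld 0 x y)
    simpa using this
  have hcomp := ((hD.differentiable (by norm_num)).differentiableAt.hasFDerivAt).comp_hasDerivAt w hline
  have heq : (fun w' : ℝ => fderiv ℝ L (splice3 d l hl hld w' x y) (Pi.single j 1))
      = fun w' => (fun v => fderiv ℝ L v (Pi.single j 1))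
          (splice3 d l hl hld 0 x y + w' • e₀) := by
    funext w'; rw [splice3_affine d l hl hld w' x y]
  rw [heq, splice3_affine d l hl hld w x y]
  exact hcomp

set_option maxHeartbeats 1000000 in
/-- **Increment bound for partial derivatives of `L`**
(estimate used in the proof of Proposition 4.6): if `|∂ⱼL(w,x,y)| ≤ (1+‖(w,x)‖^{γⱼ})u(y)`
and `|∂₁∂ⱼL(w,x,y)| ≤ (1+‖(w,x)‖^{γ₁ⱼ})u(y)` with `0 ≤ γⱼ ≤ 1`, then for every `M > 0`
there is `K > 0` with
`|∂ⱼL(w+z,x,y) − ∂ⱼL(w,x,y)| ≤ K (1 + |w|^{γⱼ+γ₁ⱼ}) |z|^{γⱼ}` whenever `‖x‖, ‖y‖ ≤ M`.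
Here `‖(w,x)‖ = max |w| ‖x‖` is the maximum norm. -/
theorem stmt13 (d l : ℕ) (hl : 1 ≤ l) (hld : l ≤ d) (j : Fin d)
    (u : (Fin (d - l) → ℝ) → ℝ) (hu_cont : Continuous u) (hu_nonneg : ∀ y, 0 ≤ u y)
    (γj γ1j : ℝ) (hγj0 : 0 ≤ γj) (hγj1 : γj ≤ 1) (hγ1j : 0 ≤ γ1j)
    (L : (Fin d → ℝ) → ℝ) (hL : ContDiff ℝ 2 L)
    (hDbound : ∀ (w : ℝ) (x : Fin (l - 1) → ℝ) (y : Fin (d - l) → ℝ),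
      |fderiv ℝ L (splice3 d l hl hld w x y) (Pi.single j 1)| ≤
        (1 + (max |w| ‖x‖) ^ γj) * u y)
    (hD2bound : ∀ (w : ℝ) (x : Fin (l - 1) → ℝ) (y : Fin (d - l) → ℝ),
      |fderiv ℝ (fun v => fderiv ℝ L v (Pi.single j 1))
          (splice3 d l hl hld w x y) (Pi.single (⟨0, by omega⟩ : Fin d) 1)| ≤
        (1 + (max |w| ‖x‖) ^ γ1j) * u y) :
    ∀ M : ℝ, 0 < M → ∃ K : ℝ, 0 < K ∧
      ∀ (w z : ℝ) (x : Fin (l - 1) → ℝ) (y : Fin (d - l) → ℝ), ‖x‖ ≤ M → ‖y‖ ≤ M →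
        |fderiv ℝ L (splice3 d l hl hld (w + z) x y) (Pi.single j 1) -
          fderiv ℝ L (splice3 d l hl hld w x y) (Pi.single j 1)| ≤
        K * (1 + |w| ^ (γj + γ1j)) * |z| ^ γj := by
  intro M hM
  obtain ⟨C0, hC0⟩ := (isCompact_closedBall (0 : Fin (d-l) → ℝ) M).exists_bound_of_continuousOn
    hu_cont.continuousOn
  set C : ℝ := max C0 1 with hCdef
  have hC1 : (1:ℝ) ≤ C := le_max_right _ _
  have hCpos : (0:ℝ) < C := lt_of_lt_of_le one_pos hC1
  have hCu : ∀ y : Fin (d-l) → ℝ, ‖y‖ ≤ M → u y ≤ C := by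
    intro y hy
    have hmem : y ∈ Metric.closedBall (0 : Fin (d-l) → ℝ) M := by
      simpa [Metric.mem_closedBall, dist_zero_right] using hy
    exact le_trans (le_trans (le_abs_self _) (hC0 y hmem)) (le_max_left _ _)
  set X : ℝ := (2+2*M)^γ1j with hXdef
  have hX0 : 0 ≤ X := Real.rpow_nonneg (by linarith) _
  refine ⟨2*C*(3+2*M) + C*(1+X), by positivity, ?_⟩
  intro w z x y hx hy
  clear_value C X
  set t : ℝ := γj + γ1j with htdef
  clear_value t
  have hwt : 0 ≤ |w| ^ t := Real.rpow_nonneg (abs_nonneg w) t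
  have huy : u y ≤ C := hCu y hy
  have huy0 : 0 ≤ u y := hu_nonneg y
  have hx0 : 0 ≤ ‖x‖ := norm_nonneg x
  have hzj : 0 ≤ |z| ^ γj := Real.rpow_nonneg (abs_nonneg z) γj
  by_cases hz0 : z = 0
  · subst hz0
    simp only [add_zero, sub_self, abs_zero]
    positivity
  rcases le_or_gt |z| 1 with hz1 | hz1
  · -- small increment: mean value theorem
    set s : Set ℝ := Set.Icc (min w (w+z)) (max w (w+z)) with hsdef
    have hws : w ∈ s := Set.mem_Icc.mpr ⟨min_le_left _ _, le_max_left _ _⟩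
    have hwzs : w + z ∈ s := Set.mem_Icc.mpr ⟨min_le_right _ _, le_max_right _ _⟩
    have key : (|w|+1+M)^γ1j ≤ X * (1+|w|^t) := by
      calc (|w|+1+M)^γ1j ≤ ((1+M)*(|w|+1))^γ1j := by
            apply Real.rpow_le_rpow (by positivity) (by nlinarith [abs_nonneg w]) hγ1j
        _ = (1+M)^γ1j * (|w|+1)^γ1j := Real.mul_rpow (by linarith) (by positivity)
        _ ≤ (1+M)^γ1j * (2^γ1j * (1+|w|^t)) := by
            exact mul_le_mul_of_nonneg_left
              (aux_rpow |w| γ1j t (abs_nonneg w) hγ1j (by rw [htdef]; linarith))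
              (Real.rpow_nonneg (by linarith) _)
        _ = X * (1+|w|^t) := by
            rw [hXdef, ← mul_assoc, ← Real.mul_rpow (by linarith) (by norm_num)]
            ring_nf
    have hbound : ∀ t' ∈ s,
        ‖fderiv ℝ (fun v => fderiv ℝ L v (Pi.single j 1))
          (splice3 d l hl hld t' x y) (Pi.single (⟨0, by omega⟩ : Fin d) 1)‖
          ≤ (1 + X * (1+|w|^t)) * C := by
      intro t' ht'
      obtain ⟨h1, h2⟩ := Set.mem_Icc.mp ht'
      have habs : |t'| ≤ |w| + |z| := by
        have hmin : -(|w|+|z|) ≤ min w (w+z) :=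
          le_min (by linarith [neg_abs_le w, abs_nonneg z])
            (by linarith [neg_abs_le w, neg_abs_le z])
        have hmax : max w (w+z) ≤ |w|+|z| :=
          max_le (by linarith [le_abs_self w, abs_nonneg z])
            (by linarith [le_abs_self w, le_abs_self z])
        exact abs_le.mpr ⟨by linarith, by linarith⟩
      have hmaxle : max |t'| ‖x‖ ≤ |w|+1+M :=
        max_le (by linarith) (by linarith [abs_nonneg w])
      have hrp : (max |t'| ‖x‖)^γ1j ≤ X * (1+|w|^t) :=
        le_trans (Real.rpow_le_rpow (le_max_of_le_right hx0) hmaxle hγ1j) key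
      calc ‖fderiv ℝ (fun v => fderiv ℝ L v (Pi.single j 1))
            (splice3 d l hl hld t' x y) (Pi.single (⟨0, by omega⟩ : Fin d) 1)‖
          ≤ (1 + (max |t'| ‖x‖)^γ1j) * u y := hD2bound t' x y
        _ ≤ (1 + X * (1+|w|^t)) * C := by
            apply mul_le_mul (by linarith) huy huy0
            nlinarith
    have hmvt := Convex.norm_image_sub_le_of_norm_hasDerivWithin_le
      (f := fun w' => fderiv ℝ L (splice3 d l hl hld w' x y) (Pi.single j 1))
      (f' := fun w' => fderiv ℝ (fun v => fderiv ℝ L v (Pi.single j 1))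
          (splice3 d l hl hld w' x y) (Pi.single (⟨0, by omega⟩ : Fin d) 1))
      (fun t' _ => (splice3_hasDerivAt d l hl hld j L hL x y t').hasDerivWithinAt)
      hbound (convex_Icc _ _) hws hwzs
    rw [add_sub_cancel_left, Real.norm_eq_abs, Real.norm_eq_abs] at hmvt
    have hzle : |z| ≤ |z|^γj := by
      have h0 : 0 < |z| := abs_pos.mpr hz0
      calc |z| = |z|^(1:ℝ) := (Real.rpow_one _).symm
        _ ≤ |z|^γj := Real.rpow_le_rpow_of_exponent_ge h0 hz1 hγj1
    have hC2 : (1 + X * (1+|w|^t)) * C ≤ (2*C*(3+2*M) + C*(1+X)) * (1+|w|^t) := by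
      nlinarith [mul_nonneg (le_of_lt hCpos) hwt, mul_pos hCpos hM,
        mul_nonneg (mul_nonneg (le_of_lt hCpos) (le_of_lt hM)) hwt,
        mul_nonneg (mul_nonneg hX0 (le_of_lt hCpos)) hwt]
    calc |fderiv ℝ L (splice3 d l hl hld (w + z) x y) (Pi.single j 1) -
          fderiv ℝ L (splice3 d l hl hld w x y) (Pi.single j 1)|
        ≤ (1 + X * (1+|w|^t)) * C * |z| := hmvt
      _ ≤ (2*C*(3+2*M) + C*(1+X)) * (1+|w|^t) * |z|^γj := by
          apply mul_le_mul hC2 hzle (abs_nonneg z) (by positivity)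
  · -- large increment: bound each term separately
    have hz1' : (1:ℝ) ≤ |z| := le_of_lt hz1
    have hZ1 : (1:ℝ) ≤ |z|^γj := Real.one_le_rpow hz1' hγj0
    have e1 : (1+M)^γj ≤ 1+M := by
      nth_rewrite 2 [← Real.rpow_one (1+M)]
      exact Real.rpow_le_rpow_of_exponent_le (by linarith) hγj1
    have e3 : (2:ℝ)^γj ≤ 2 := by
      nth_rewrite 2 [← Real.rpow_one 2]
      exact Real.rpow_le_rpow_of_exponent_le one_le_two hγj1
    have e2 : (1+|w|)^γj ≤ 2*(1+|w|^t) := by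
      have h := aux_rpow |w| γj t (abs_nonneg w) hγj0 (by rw [htdef]; linarith)
      rw [add_comm 1 |w|]
      nlinarith [Real.rpow_nonneg (abs_nonneg w) t, Real.rpow_nonneg (show (0:ℝ) ≤ 2 by norm_num) γj]
    have hPmul : ((1+M)*(1+|w|))^γj ≤ (1+M)*(2*(1+|w|^t)) := by
      rw [Real.mul_rpow (by linarith) (by positivity)]
      exact mul_le_mul e1 e2 (Real.rpow_nonneg (by positivity) _) (by linarith)
    have hA : |fderiv ℝ L (splice3 d l hl hld (w+z) x y) (Pi.single j 1)|
        ≤ (1 + (1+M)*(2*(1+|w|^t))*|z|^γj) * C := by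
      refine le_trans (hDbound (w+z) x y) ?_
      have hmaxle : max |w+z| ‖x‖ ≤ (1+M)*(1+|w|)*|z| := by
        apply max_le
        · nlinarith [abs_add_le w z, mul_nonneg (abs_nonneg w) (sub_nonneg.mpr hz1'),
            mul_nonneg (le_of_lt hM) (abs_nonneg z),
            mul_nonneg (mul_nonneg (le_of_lt hM) (abs_nonneg w)) (abs_nonneg z)]
        · nlinarith [mul_nonneg (abs_nonneg w) (abs_nonneg z),
            mul_nonneg (le_of_lt hM) (sub_nonneg.mpr hz1'),
            mul_nonneg (mul_nonneg (le_of_lt hM) (abs_nonneg w)) (abs_nonneg z),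
            mul_nonneg (le_of_lt hM) (mul_nonneg (abs_nonneg w) (abs_nonneg z))]
      have : (max |w+z| ‖x‖)^γj ≤ (1+M)*(2*(1+|w|^t))*|z|^γj := by
        calc (max |w+z| ‖x‖)^γj ≤ ((1+M)*(1+|w|)*|z|)^γj :=
              Real.rpow_le_rpow (le_max_of_le_right hx0) hmaxle hγj0
          _ = ((1+M)*(1+|w|))^γj * |z|^γj :=
              Real.mul_rpow (by positivity) (abs_nonneg z)
          _ ≤ (1+M)*(2*(1+|w|^t))*|z|^γj :=
              mul_le_mul_of_nonneg_right hPmul hzj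
      apply mul_le_mul (by linarith) huy huy0
      nlinarith [mul_nonneg (mul_nonneg (show (0:ℝ) ≤ 1+M by linarith)
        (show (0:ℝ) ≤ 2*(1+|w|^t) by linarith)) hzj]
    have hB : |fderiv ℝ L (splice3 d l hl hld w x y) (Pi.single j 1)|
        ≤ (1 + (1+M)*(2*(1+|w|^t))) * C := by
      refine le_trans (hDbound w x y) ?_
      have hmaxle : max |w| ‖x‖ ≤ (1+M)*(1+|w|) := by
        apply max_le
        · nlinarith [abs_nonneg w]
        · nlinarith [abs_nonneg w]
      have : (max |w| ‖x‖)^γj ≤ (1+M)*(2*(1+|w|^t)) :=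
        le_trans (Real.rpow_le_rpow (le_max_of_le_right hx0) hmaxle hγj0) hPmul
      apply mul_le_mul (by linarith) huy huy0
      nlinarith [mul_nonneg (show (0:ℝ) ≤ 1+M by linarith)
        (show (0:ℝ) ≤ 2*(1+|w|^t) by linarith)]
    have htri : |fderiv ℝ L (splice3 d l hl hld (w + z) x y) (Pi.single j 1) -
          fderiv ℝ L (splice3 d l hl hld w x y) (Pi.single j 1)|
        ≤ |fderiv ℝ L (splice3 d l hl hld (w+z) x y) (Pi.single j 1)|
          + |fderiv ℝ L (splice3 d l hl hld w x y) (Pi.single j 1)| := abs_sub _ _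
    have hfin : (1 + (1+M)*(2*(1+|w|^t))*|z|^γj) * C + (1 + (1+M)*(2*(1+|w|^t))) * C
        ≤ (2*C*(3+2*M) + C*(1+X)) * (1+|w|^t) * |z|^γj := by
      nlinarith [mul_nonneg hwt (sub_nonneg.mpr hZ1), mul_nonneg hX0 hwt,
        mul_nonneg (mul_nonneg hX0 hwt) (sub_nonneg.mpr hZ1),
        mul_nonneg hX0 (sub_nonneg.mpr hZ1),
        mul_nonneg (mul_nonneg (le_of_lt hM) hwt) (sub_nonneg.mpr hZ1),
        mul_nonneg (le_of_lt hM) (sub_nonneg.mpr hZ1),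
        mul_nonneg (le_of_lt hM) hwt]
    linarith
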